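/- There exists an irreducible homogeneous polynomial f of degree 3 in ℂ[x₀,…,x₅] such that for every integer r ≥ 2 there are infinitely many 3r×3r matrices, all of whose entries are homogeneous of degree 1 and whose determinant equals f^r, that are pairwise inequivalent, where two such matrices M and M′ are equivalent if M′ = P·M·Q for some invertible scalar matrices P, Q ∈ GL(3r, ℂ). -/
import Mathlib

noncomputable section WildAux

open Matrix

/-- The base ring `ℂ[x₀,…,x₅]`. -/
abbrev Rpoly : Type := MvPolynomial (Fin 6) ℂ

/-- A 3×3 matrix of linear forms with determinant `x₀³ + x₁x₂x₃`. -/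
def Mmat : Matrix (Fin 3) (Fin 3) Rpoly :=
  !![MvPolynomial.X 0, MvPolynomial.X 1, 0;
     0, MvPolynomial.X 0, MvPolynomial.X 2;
     MvPolynomial.X 3, 0, MvPolynomial.X 0]

/-- The cubic `x₀³ + x₁x₂x₃`. -/
def fcubic : Rpoly :=
  MvPolynomial.X 0 ^ 3 + MvPolynomial.X 1 * (MvPolynomial.X 2 * MvPolynomial.X 3)

lemma Mmat_det : Mmat.det = fcubic := by
  simp [Mmat, Matrix.det_fin_three, fcubic]
  ring

lemma Mmat_hom (i j : Fin 3) : (Mmat i j).IsHomogeneous 1 := by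
  fin_cases i <;> fin_cases j <;> simp [Mmat] <;>
    first
      | exact MvPolynomial.isHomogeneous_X _ _
      | exact MvPolynomial.isHomogeneous_zero _ _ _

lemma Mmat_eval (a : Fin 6 → ℂ) (h0 : a 0 = 0) (h1 : a 1 = 0) (h2 : a 2 = 0)
    (h3 : a 3 = 0) (i j : Fin 3) : MvPolynomial.eval a (Mmat i j) = 0 := by
  fin_cases i <;> fin_cases j <;> simp [Mmat, h0, h1, h2, h3]

def esum (n : ℕ) : Fin 3 ⊕ Fin (3 * n) ≃ Fin (3 * (n + 1)) :=
  finSumFinEquiv.trans (finCongr (by ring))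

def Dmat : (n : ℕ) → Matrix (Fin (3 * n)) (Fin (3 * n)) Rpoly
  | 0 => 1
  | n + 1 => Matrix.reindex (esum n) (esum n) (Matrix.fromBlocks Mmat 0 0 (Dmat n))

lemma Dmat_det : ∀ n, (Dmat n).det = fcubic ^ n
  | 0 => by simp [Dmat]
  | n + 1 => by
      rw [Dmat, Matrix.det_reindex_self, Matrix.det_fromBlocks_zero₂₁, Mmat_det,
        Dmat_det n, ← pow_succ']

lemma Dmat_hom : ∀ (n : ℕ) (i j : Fin (3 * n)), ((Dmat n) i j).IsHomogeneous 1
  | 0, i, _ => absurd i.2 (by omega)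
  | n + 1, i, j => by
      rw [Dmat, Matrix.reindex_apply, Matrix.submatrix_apply]
      cases hi : (esum n).symm i <;> cases hj : (esum n).symm j <;>
        simp only [Matrix.fromBlocks_apply₁₁, Matrix.fromBlocks_apply₁₂,
          Matrix.fromBlocks_apply₂₁, Matrix.fromBlocks_apply₂₂, Matrix.zero_apply] <;>
        first
          | exact Mmat_hom _ _
          | exact MvPolynomial.isHomogeneous_zero _ _ _
          | exact Dmat_hom n _ _

lemma Dmat_eval (a : Fin 6 → ℂ) (h0 : a 0 = 0) (h1 : a 1 = 0) (h2 : a 2 = 0)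
    (h3 : a 3 = 0) :
    ∀ (n : ℕ) (i j : Fin (3 * n)), MvPolynomial.eval a ((Dmat n) i j) = 0
  | 0, i, _ => absurd i.2 (by omega)
  | n + 1, i, j => by
      rw [Dmat, Matrix.reindex_apply, Matrix.submatrix_apply]
      cases hi : (esum n).symm i <;> cases hj : (esum n).symm j <;>
        simp only [Matrix.fromBlocks_apply₁₁, Matrix.fromBlocks_apply₁₂,
          Matrix.fromBlocks_apply₂₁, Matrix.fromBlocks_apply₂₂, Matrix.zero_apply,
          map_zero]
      · exact Mmat_eval a h0 h1 h2 h3 _ _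
      · exact Dmat_eval a h0 h1 h2 h3 n _ _

/-- The linear form `x₄ + t·x₅`. -/
def lform (t : ℕ) : Rpoly := MvPolynomial.X 4 + MvPolynomial.C (t : ℂ) * MvPolynomial.X 5

lemma lform_hom (t : ℕ) : (lform t).IsHomogeneous 1 :=
  (MvPolynomial.isHomogeneous_X _ _).add ((MvPolynomial.isHomogeneous_X _ _).C_mul _)

/-- The `3(n+2) × 3(n+2)` matrix of linear forms, block upper triangular with diagonal
blocks `Mmat, Mmat, …, Mmat` and an off-diagonal block full of copies of `x₄ + t x₅`. -/
def Fmat (n t : ℕ) : Matrix (Fin (3 * (n + 2))) (Fin (3 * (n + 2))) Rpoly :=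
  Matrix.reindex (esum (n + 1)) (esum (n + 1))
    (Matrix.fromBlocks Mmat (Matrix.of fun _ _ => lform t) 0 (Dmat (n + 1)))

lemma Fmat_det (n t : ℕ) : (Fmat n t).det = fcubic ^ (n + 2) := by
  rw [Fmat, Matrix.det_reindex_self, Matrix.det_fromBlocks_zero₂₁, Mmat_det,
    Dmat_det, ← pow_succ']

lemma Fmat_hom (n t : ℕ) (i j : Fin (3 * (n + 2))) : ((Fmat n t) i j).IsHomogeneous 1 := by
  rw [Fmat, Matrix.reindex_apply, Matrix.submatrix_apply]
  cases hi : (esum (n + 1)).symm i <;> cases hj : (esum (n + 1)).symm j <;>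
    simp only [Matrix.fromBlocks_apply₁₁, Matrix.fromBlocks_apply₁₂,
      Matrix.fromBlocks_apply₂₁, Matrix.fromBlocks_apply₂₂, Matrix.zero_apply,
      Matrix.of_apply]
  · exact Mmat_hom _ _
  · exact lform_hom t
  · exact MvPolynomial.isHomogeneous_zero _ _ _
  · exact Dmat_hom (n + 1) _ _

lemma Fmat_eval (n t : ℕ) (a : Fin 6 → ℂ) (h0 : a 0 = 0) (h1 : a 1 = 0) (h2 : a 2 = 0)
    (h3 : a 3 = 0) (hl : MvPolynomial.eval a (lform t) = 0) (i j : Fin (3 * (n + 2))) :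
    MvPolynomial.eval a ((Fmat n t) i j) = 0 := by
  rw [Fmat, Matrix.reindex_apply, Matrix.submatrix_apply]
  cases hi : (esum (n + 1)).symm i <;> cases hj : (esum (n + 1)).symm j <;>
    simp only [Matrix.fromBlocks_apply₁₁, Matrix.fromBlocks_apply₁₂,
      Matrix.fromBlocks_apply₂₁, Matrix.fromBlocks_apply₂₂, Matrix.zero_apply,
      Matrix.of_apply, map_zero]
  · exact Mmat_eval a h0 h1 h2 h3 _ _
  · exact hl
  · exact Dmat_eval a h0 h1 h2 h3 (n + 1) _ _

lemma Fmat_entry (n t : ℕ) :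
    (Fmat n t) (esum (n + 1) (Sum.inl 0)) (esum (n + 1) (Sum.inr ⟨0, by omega⟩)) = lform t := by
  rw [Fmat, Matrix.reindex_apply, Matrix.submatrix_apply, Equiv.symm_apply_apply,
    Equiv.symm_apply_apply, Matrix.fromBlocks_apply₁₂, Matrix.of_apply]

lemma fcubic_hom : fcubic.IsHomogeneous 3 := by
  have h1 : (MvPolynomial.X 0 ^ 3 : Rpoly).IsHomogeneous 3 := by
    simpa using (MvPolynomial.isHomogeneous_X ℂ (0 : Fin 6)).pow 3
  have h2 : (MvPolynomial.X 1 * (MvPolynomial.X 2 * MvPolynomial.X 3) : Rpoly).IsHomogeneous 3 := by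
    simpa using (MvPolynomial.isHomogeneous_X ℂ (1 : Fin 6)).mul
      ((MvPolynomial.isHomogeneous_X ℂ (2 : Fin 6)).mul (MvPolynomial.isHomogeneous_X ℂ (3 : Fin 6)))
  exact h1.add h2

lemma prime_X0 : Prime (MvPolynomial.X 0 : MvPolynomial (Fin 5) ℂ) := by
  refine comap_prime (f := MvPolynomial.finSuccEquiv ℂ 4)
    (g := (MvPolynomial.finSuccEquiv ℂ 4).symm) (fun a => by simp) ?_
  rw [MvPolynomial.finSuccEquiv_X_zero]
  exact Polynomial.prime_X

lemma not_X0_dvd_X12 : ¬ (MvPolynomial.X 0 : MvPolynomial (Fin 5) ℂ) ∣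
    MvPolynomial.X 1 * MvPolynomial.X 2 := by
  intro h
  rcases prime_X0.2.2 _ _ h with h' | h' <;> simp [MvPolynomial.X_dvd_X] at h'

lemma fcubic_image :
    MvPolynomial.finSuccEquiv ℂ 5 fcubic =
      Polynomial.X ^ 3 +
        Polynomial.C (MvPolynomial.X 0 * (MvPolynomial.X 1 * MvPolynomial.X 2)) := by
  have h1 : (1 : Fin 6) = Fin.succ 0 := rfl
  have h2 : (2 : Fin 6) = Fin.succ 1 := rfl
  have h3 : (3 : Fin 6) = Fin.succ 2 := rfl
  rw [fcubic, map_add, map_pow, _root_.map_mul, _root_.map_mul, h1, h2, h3,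
    MvPolynomial.finSuccEquiv_X_zero, MvPolynomial.finSuccEquiv_X_succ,
    MvPolynomial.finSuccEquiv_X_succ, MvPolynomial.finSuccEquiv_X_succ,
    ← Polynomial.C_mul, ← Polynomial.C_mul]

lemma fcubic_irr : Irreducible fcubic := by
  rw [← MulEquiv.irreducible_iff (MvPolynomial.finSuccEquiv ℂ 5), fcubic_image]
  set c : MvPolynomial (Fin 5) ℂ := MvPolynomial.X 0 * (MvPolynomial.X 1 * MvPolynomial.X 2)
    with hc
  have hmonic : (Polynomial.X ^ 3 + Polynomial.C c).Monic :=
    Polynomial.monic_X_pow_add_C c (by norm_num)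
  have hdeg : (Polynomial.X ^ 3 + Polynomial.C c).degree = 3 :=
    Polynomial.degree_X_pow_add_C (by norm_num) c
  refine Polynomial.irreducible_of_eisenstein_criterion
    (P := Ideal.span {(MvPolynomial.X 0 : MvPolynomial (Fin 5) ℂ)}) ?_ ?_ ?_ ?_ ?_ ?_
  · exact (Ideal.span_singleton_prime (MvPolynomial.X_ne_zero 0)).mpr prime_X0
  · rw [hmonic.leadingCoeff, Ideal.mem_span_singleton]
    intro h
    exact prime_X0.not_unit (isUnit_of_dvd_one h)
  · intro k hk
    rw [hdeg] at hk
    have hk' : k < 3 := by exact_mod_cast hk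
    rw [Ideal.mem_span_singleton]
    interval_cases k <;>
      simp [Polynomial.coeff_X_pow, hc, dvd_mul_right]
  · rw [hdeg]; norm_num
  · rw [Ideal.span_singleton_pow, Ideal.mem_span_singleton]
    intro h
    simp only [Polynomial.coeff_add, Polynomial.coeff_X_pow, Polynomial.coeff_C] at h
    norm_num at h
    rw [hc, sq] at h
    exact not_X0_dvd_X12 ((mul_dvd_mul_iff_left (MvPolynomial.X_ne_zero 0)).mp h)
  · exact hmonic.isPrimitive

end WildAux

/-- There exists an irreducible homogeneous cubic `f` in
`ℂ[x₀,…,x₅]` such that for every `r ≥ 2` there are infinitely many (an infinite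
family of pairwise inequivalent) `3r × 3r` matrices of linear forms with
determinant `f ^ r`, where `M`, `M'` are equivalent if `M' = P·M·Q` for some
invertible scalar matrices `P, Q ∈ GL(3r, ℂ)`. -/
theorem exists_cubic_wild_representation_type :
    ∃ f : MvPolynomial (Fin 6) ℂ, Irreducible f ∧ f.IsHomogeneous 3 ∧
      ∀ r : ℕ, 2 ≤ r →
        ∃ F : ℕ → Matrix (Fin (3 * r)) (Fin (3 * r)) (MvPolynomial (Fin 6) ℂ),
          (∀ t, (∀ i j, (F t i j).IsHomogeneous 1) ∧ (F t).det = f ^ r) ∧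
          ∀ t t', t ≠ t' →
            ¬ ∃ (P Q : Matrix (Fin (3 * r)) (Fin (3 * r)) ℂ),
              IsUnit P ∧ IsUnit Q ∧
              F t' = P.map MvPolynomial.C * F t * Q.map MvPolynomial.C := by
  refine ⟨fcubic, fcubic_irr, fcubic_hom, ?_⟩
  intro r hr
  obtain ⟨n, rfl⟩ : ∃ n, r = n + 2 := ⟨r - 2, by omega⟩
  refine ⟨fun t => Fmat n t, fun t => ⟨Fmat_hom n t, Fmat_det n t⟩, ?_⟩
  intro t t' hne
  rintro ⟨P, Q, -, -, hEq⟩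
  set a : Fin 6 → ℂ := ![0, 0, 0, 0, (t : ℂ), -1] with ha
  have h0 : a 0 = 0 := rfl
  have h1 : a 1 = 0 := rfl
  have h2 : a 2 = 0 := rfl
  have h3 : a 3 = 0 := rfl
  have h4 : a 4 = (t : ℂ) := rfl
  have h5 : a 5 = -1 := rfl
  have hl : MvPolynomial.eval a (lform t) = 0 := by
    simp [lform, h4, h5]
  have hzero : (Fmat n t).map (MvPolynomial.eval a) = 0 := by
    ext i j
    simp only [Matrix.map_apply, Matrix.zero_apply]
    exact Fmat_eval n t a h0 h1 h2 h3 hl i j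
  have hmap := congrArg (fun M : Matrix _ _ Rpoly => M.map (MvPolynomial.eval a)) hEq
  simp only [Matrix.map_mul (f := (MvPolynomial.eval a : Rpoly →+* ℂ))] at hmap
  rw [hzero, mul_zero, zero_mul] at hmap
  have hent := congrFun (congrFun hmap (esum (n + 1) (Sum.inl 0)))
    (esum (n + 1) (Sum.inr ⟨0, by omega⟩))
  rw [Matrix.map_apply, Fmat_entry, Matrix.zero_apply] at hent
  simp [lform, h4, h5] at hent
  rw [add_neg_eq_zero] at hent
  exact hne (by exact_mod_cast hent)
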